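/- arXiv:2507.14530 — 3 statements merged into one kernel-verified Lean document; each statement's English description precedes it below -/
import Mathlib

section
/- Let f: Γ → Γ' be a morphism of graphs and let (Γ' ×_φ F, p, Γ') be an F-graph bundle induced by an F-voltage function φ on Γ'. Then, with respect to fixed vertex orders and lexicographical orders on products, the adjacency matrix of the total space Γ ×_{f^*φ} F of the pullback bundle satisfies A_{Γ ×_{f^*φ} F} = Σ_{ψ ∈ Aut(F)} [A_Γ ∘ B_{f,ψ}] ⊗ perm(ψ) + I_{|V_Γ|} ⊗ A_F, where B_{f,ψ} = M_f^T (I + A_{Γ'}(ψ)) M_f if ψ = id_F and B_{f,ψ} = M_f^T A_{Γ'}(ψ) M_f otherwise (here I is the identity matrix of size |V_{Γ'}|). -/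
/-!
For any voltage function `φ` on `Γ`, the adjacency matrix of `Γ ×_φ F` is
`∑_ψ A_Γ(ψ) ⊗ perm ψ + I ⊗ A_F`: an edge `(v, x) ∼ (w, y)` either lies over an edge `v ∼ w`
with `y = φ(v, w) x`, or inside a fiber. It therefore suffices to see that `A_Γ ∘ B_{f,ψ}` is
`A_Γ(f^*φ)(ψ)`, entrywise over an edge `v ∼ w`, where `(M_fᵀ X M_f)(v, w) = X(f v, f w)`.
If `f v = f w`, then `A_{Γ'}(ψ)` vanishes there (`Γ'` has no loops) and the identity term
contributes exactly for `ψ = id = f^*φ(v, w)`; otherwise `f v ∼ f w` since `f` is a morphism,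
and the entry is `[φ(f v, f w) = ψ]`.
-/

open Classical Matrix Kronecker

universe u

noncomputable section

/-- A morphism of graphs: adjacent vertices are mapped to adjacent or equal vertices. -/
def IsGraphMorphism {V W : Type*} (G : SimpleGraph V) (H : SimpleGraph W) (f : V → W) : Prop :=
  ∀ ⦃a b : V⦄, G.Adj a b → H.Adj (f a) (f b) ∨ f a = f b

/-- The graph `X̃` obtained from `X` by deleting the edges lying inside fibers of `p`. -/
def delFiberEdges {VX VB : Type*} (X : SimpleGraph VX) (p : VX → VB) : SimpleGraph VX where
  Adj a b := X.Adj a b ∧ p a ≠ p b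
  symm := by
    constructor
    intro a b h
    exact ⟨h.1.symm, Ne.symm h.2⟩
  loopless := by
    constructor
    intro a h
    exact X.loopless.irrefl a h.1

/-- `(X, p, B)` is an `F`-graph bundle. -/
structure IsGraphBundle {VF VX VB : Type*} (F : SimpleGraph VF) (X : SimpleGraph VX)
    (p : VX → VB) (B : SimpleGraph VB) : Prop where
  morphism : IsGraphMorphism X B p
  surj : Function.Surjective p
  fiber_iso : ∀ v : VB, Nonempty ((X.induce (p ⁻¹' {v})) ≃g F)
  fiber_card : ∀ v : VB, Nat.card (p ⁻¹' {v}) = Nat.card VF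
  covering : ∀ x : VX,
    Set.BijOn p ((delFiberEdges X p).neighborSet x) (B.neighborSet (p x))
  transport : ∀ ⦃v w : VB⦄, B.Adj v w →
    ∃ ψ : (X.induce (p ⁻¹' {v})) ≃g (X.induce (p ⁻¹' {w})),
      ∀ x : (p ⁻¹' {v}), X.Adj x.1 (ψ x).1

/-- Vertices of the pullback graph. -/
abbrev PullbackVert {VB VX VC : Type*} (f : VB → VC) (p : VX → VC) :=
  {a : VB × VX // f a.1 = p a.2}

/-- The total space of the pullback of the bundle `(X, p, C)` along `f : B → C`. -/
def pullbackGraph {VB VX VC : Type*} (B : SimpleGraph VB) (X : SimpleGraph VX)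
    (f : VB → VC) (p : VX → VC) (C : SimpleGraph VC) :
    SimpleGraph (PullbackVert f p) where
  Adj a b :=
    (a.1.1 = b.1.1 ∧ X.Adj a.1.2 b.1.2) ∨
    (B.Adj a.1.1 b.1.1 ∧ f a.1.1 = f b.1.1 ∧ a.1.2 = b.1.2) ∨
    (B.Adj a.1.1 b.1.1 ∧ C.Adj (f a.1.1) (f b.1.1) ∧ X.Adj a.1.2 b.1.2)
  symm := by
    constructor
    rintro a b (⟨h1, h2⟩ | ⟨h1, h2, h3⟩ | ⟨h1, h2, h3⟩)
    · exact Or.inl ⟨h1.symm, h2.symm⟩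
    · exact Or.inr (Or.inl ⟨h1.symm, h2.symm, h3.symm⟩)
    · exact Or.inr (Or.inr ⟨h1.symm, h2.symm, h3.symm⟩)
  loopless := by
    constructor
    rintro a (⟨_, h⟩ | ⟨h, _⟩ | ⟨h, _⟩)
    · exact X.loopless.irrefl _ h
    · exact B.loopless.irrefl _ h
    · exact B.loopless.irrefl _ h

/-- The projection of the pullback bundle. -/
def pullbackProj {VB VX VC : Type*} (f : VB → VC) (p : VX → VC) :
    PullbackVert f p → VB := fun a => a.1.1

/-- Two graph bundles over the same base are equivalent. -/
def BundlesEquiv {VX VY VB : Type*} (X : SimpleGraph VX) (p : VX → VB)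
    (Y : SimpleGraph VY) (q : VY → VB) : Prop :=
  ∃ Φ : X ≃g Y, ∀ x, q (Φ x) = p x

/-- A graph bundle is trivial if it is equivalent to `(B □ F, π, B)` with `π (v, f) = v`. -/
def IsTrivialBundle {VF VX VB : Type*} (F : SimpleGraph VF) (X : SimpleGraph VX)
    (p : VX → VB) (B : SimpleGraph VB) : Prop :=
  ∃ Φ : X ≃g (B.boxProd F), ∀ x, (Φ x).1 = p x

/-- An `F`-voltage function on `B`. -/
structure VoltageFunction {VB VF : Type*} (B : SimpleGraph VB) (F : SimpleGraph VF) where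
  volt : VB → VB → (F ≃g F)
  volt_symm : ∀ v w, volt w v = (volt v w).symm

/-- The graph `B ×_φ F` associated with a voltage function. -/
def voltageGraph {VB VF : Type*} (B : SimpleGraph VB) (F : SimpleGraph VF)
    (φ : VoltageFunction B F) : SimpleGraph (VB × VF) where
  Adj a b := (B.Adj a.1 b.1 ∧ b.2 = φ.volt a.1 b.1 a.2) ∨ (a.1 = b.1 ∧ F.Adj a.2 b.2)
  symm := by
    constructor
    rintro a b (⟨h1, h2⟩ | ⟨h1, h2⟩)
    · refine Or.inl ⟨h1.symm, ?_⟩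
      rw [φ.volt_symm, h2, RelIso.symm_apply_apply]
    · exact Or.inr ⟨h1.symm, h2.symm⟩
  loopless := by
    constructor
    rintro a (⟨h, _⟩ | ⟨_, h⟩)
    · exact B.loopless.irrefl _ h
    · exact F.loopless.irrefl _ h

/-- The pullback of a voltage function along a graph morphism. -/
def pullbackVoltage {VB VC VF : Type*} (B : SimpleGraph VB) (C : SimpleGraph VC)
    (F : SimpleGraph VF) (f : VB → VC) (φ : VoltageFunction C F) : VoltageFunction B F where
  volt v w := if f v = f w then RelIso.refl _ else φ.volt (f v) (f w)
  volt_symm v w := by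
    try dsimp only
    by_cases h : f v = f w
    · rw [if_pos h, if_pos h.symm]
      rfl
    · rw [if_neg h, if_neg (fun hh : f w = f v => h hh.symm), φ.volt_symm]
/-- Adjacency matrix (over `ℝ`). -/
def adjMat {V : Type*} (G : SimpleGraph V) : Matrix V V ℝ :=
  Matrix.of fun a b => if G.Adj a b then 1 else 0

/-- Permutation matrix of an automorphism of `F`. -/
def permMat {VF : Type*} {F : SimpleGraph VF} (ψ : F ≃g F) : Matrix VF VF ℝ :=
  Matrix.of fun a b => if b = ψ a then 1 else 0

/-- The matrix `M_f` of a map of vertex sets. -/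
def morMat {VB VC : Type*} (f : VB → VC) : Matrix VC VB ℝ :=
  Matrix.of fun c b => if f b = c then 1 else 0

/-- The matrix `A_B(ψ)` of a voltage function. -/
def voltMat {VB VF : Type*} {B : SimpleGraph VB} {F : SimpleGraph VF}
    (φ : VoltageFunction B F) (ψ : F ≃g F) : Matrix VB VB ℝ :=
  Matrix.of fun v w => if B.Adj v w ∧ φ.volt v w = ψ then 1 else 0

instance instFiniteGraphIso {VF : Type*} [Finite VF] (F : SimpleGraph VF) :
    Finite (F ≃g F) :=
  Finite.of_injective (fun ψ => (ψ.toEquiv : VF ≃ VF)) (fun a b h => by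
    cases a; cases b; simpa using h)

noncomputable instance instFintypeGraphIso {VF : Type*} [Finite VF] (F : SimpleGraph VF) :
    Fintype (F ≃g F) :=
  Fintype.ofFinite _

/-- The image graph `f(Γ)` of a graph morphism. -/
def imageGraph {VB VC : Type*} (B : SimpleGraph VB) (f : VB → VC) :
    SimpleGraph (Set.range f) where
  Adj a b := a.1 ≠ b.1 ∧ ∃ v w, B.Adj v w ∧ f v = a.1 ∧ f w = b.1
  symm := by
    constructor
    rintro a b ⟨hne, v, w, h, hv, hw⟩
    exact ⟨hne.symm, w, v, h.symm, hw, hv⟩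
  loopless := by
    constructor
    rintro a ⟨hne, -⟩
    exact hne rfl

/-- The Cayley graph of a group with respect to a set of generators. -/
def cayleyGraph {G : Type*} [Group G] (S : Set G) : SimpleGraph G :=
  SimpleGraph.fromRel (fun x y => ∃ s ∈ S, y = x * s)

/-- The subdirect product of two groups with amalgamated factor group `B`. -/
def subdirSubgroup {A₁ A₂ B : Type*} [Group A₁] [Group A₂] [Group B]
    (φ₁ : A₁ →* B) (φ₂ : A₂ →* B) : Subgroup (A₁ × A₂) where
  carrier := {a : A₁ × A₂ | φ₁ a.1 = φ₂ a.2}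
  one_mem' := by simp
  mul_mem' := by
    intro a b ha hb
    simp only [Set.mem_setOf_eq, Prod.fst_mul, Prod.snd_mul, _root_.map_mul] at *
    rw [ha, hb]
  inv_mem' := by
    intro a ha
    simp only [Set.mem_setOf_eq, Prod.fst_inv, Prod.snd_inv, _root_.map_inv] at *
    rw [ha]

section VoltageGraph

variable {VB VF : Type*} {B : SimpleGraph VB} {F : SimpleGraph VF}

lemma sum_voltMat_kronecker_permMat_apply [Fintype VF] (φ : VoltageFunction B F)
    (v w : VB) (x y : VF) :
    (∑ ψ : F ≃g F, voltMat φ ψ ⊗ₖ permMat ψ) (v, x) (w, y) =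
      if B.Adj v w ∧ y = φ.volt v w x then 1 else 0 := by
  simp only [Matrix.sum_apply, Matrix.kroneckerMap_apply, voltMat, permMat, Matrix.of_apply,
    ite_zero_mul_ite_zero, mul_one]
  rw [Fintype.sum_eq_single (φ.volt v w) fun ψ hψ => if_neg fun h => hψ h.1.2.symm]
  simp only [and_true]

lemma one_kronecker_adjMat_apply [DecidableEq VB] (v w : VB) (x y : VF) :
    ((1 : Matrix VB VB ℝ) ⊗ₖ adjMat F) (v, x) (w, y) = if v = w ∧ F.Adj x y then 1 else 0 := by
  simp only [Matrix.kroneckerMap_apply, Matrix.one_apply, adjMat, Matrix.of_apply,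
    ite_zero_mul_ite_zero, mul_one]

theorem adjMat_voltageGraph [Fintype VF] [DecidableEq VB] (φ : VoltageFunction B F) :
    adjMat (voltageGraph B F φ) =
      (∑ ψ : F ≃g F, voltMat φ ψ ⊗ₖ permMat ψ) + (1 : Matrix VB VB ℝ) ⊗ₖ adjMat F := by
  ext ⟨v, x⟩ ⟨w, y⟩
  rw [Matrix.add_apply, sum_voltMat_kronecker_permMat_apply, one_kronecker_adjMat_apply]
  by_cases hvw : v = w
  · subst hvw
    simp [adjMat, voltageGraph]
  · simp [adjMat, voltageGraph, hvw]

end VoltageGraph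

lemma morMat_transpose_mul_mul_morMat_apply {VB VC : Type*} [Fintype VC] [DecidableEq VC]
    (f : VB → VC) (X : Matrix VC VC ℝ) (v w : VB) :
    ((morMat f)ᵀ * X * morMat f) v w = X (f v) (f w) := by
  simp [Matrix.mul_apply, morMat, ite_mul, mul_ite, Finset.sum_ite_eq]

lemma adjMat_hadamard_eq_voltMat_pullbackVoltage {VB VC VF : Type*} [Fintype VC] [DecidableEq VC]
    {B : SimpleGraph VB} {C : SimpleGraph VC} {F : SimpleGraph VF}
    (φ : VoltageFunction C F) {f : VB → VC} (hf : IsGraphMorphism B C f) (ψ : F ≃g F)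
    [Decidable (ψ = RelIso.refl F.Adj)] :
    Matrix.hadamard (adjMat B)
        (if ψ = RelIso.refl F.Adj then
            (morMat f)ᵀ * ((1 : Matrix VC VC ℝ) + voltMat φ ψ) * morMat f
          else (morMat f)ᵀ * voltMat φ ψ * morMat f) =
      voltMat (pullbackVoltage B C F f φ) ψ := by
  ext v w
  rw [Matrix.hadamard_apply, apply_ite (fun M : Matrix VB VB ℝ => M v w),
    morMat_transpose_mul_mul_morMat_apply, morMat_transpose_mul_mul_morMat_apply]
  by_cases hB : B.Adj v w
  swap
  · simp [adjMat, voltMat, hB]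
  by_cases hfvw : f v = f w
  · simp [adjMat, voltMat, pullbackVoltage, hB, hfvw, eq_comm]
  · have hC : C.Adj (f v) (f w) := (hf hB).resolve_right hfvw
    simp [adjMat, voltMat, pullbackVoltage, hB, hC, hfvw]

theorem adjMat_pullback_voltage_general
    {VB VC VF : Type*} [Fintype VC] [Fintype VF]
    [DecidableEq VB] [DecidableEq VC] [DecidableEq VF]
    (B : SimpleGraph VB) (C : SimpleGraph VC) (F : SimpleGraph VF)
    (φ : VoltageFunction C F) (f : VB → VC) (hf : IsGraphMorphism B C f) :
    adjMat (voltageGraph B F (pullbackVoltage B C F f φ)) =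
      (∑ ψ : F ≃g F,
        (Matrix.hadamard (adjMat B)
          (if ψ = RelIso.refl F.Adj then
              (morMat f)ᵀ * ((1 : Matrix VC VC ℝ) + voltMat φ ψ) * morMat f
            else (morMat f)ᵀ * voltMat φ ψ * morMat f)) ⊗ₖ permMat ψ)
      + (1 : Matrix VB VB ℝ) ⊗ₖ adjMat F := by
  simp only [adjMat_hadamard_eq_voltMat_pullbackVoltage φ hf]
  exact adjMat_voltageGraph _

/-- adjacency matrix of the total space of the pullback of a voltage bundle. -/
theorem adjMat_pullback_voltage
    {VB VC VF : Type*} [Fintype VB] [Fintype VC] [Fintype VF]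
    [DecidableEq VB] [DecidableEq VC] [DecidableEq VF]
    (B : SimpleGraph VB) (C : SimpleGraph VC) (F : SimpleGraph VF)
    (φ : VoltageFunction C F) (f : VB → VC) (hf : IsGraphMorphism B C f) :
    adjMat (voltageGraph B F (pullbackVoltage B C F f φ)) =
      (∑ ψ : F ≃g F,
        (Matrix.hadamard (adjMat B)
          (if ψ = RelIso.refl F.Adj then
              (morMat f)ᵀ * ((1 : Matrix VC VC ℝ) + voltMat φ ψ) * morMat f
            else (morMat f)ᵀ * voltMat φ ψ * morMat f)) ⊗ₖ permMat ψ)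
      + (1 : Matrix VB VB ℝ) ⊗ₖ adjMat F :=
  adjMat_pullback_voltage_general B C F φ f hf
end
end

section
/- Let (X₁,p₁,Γ) and (X₂,p₂,Γ) be an F₁-graph bundle and an F₂-graph bundle over the same base Γ, and let f: Γ' → Γ be a morphism of graphs. Then f^*(X₁ ⊞ X₂, (p₁,p₂), Γ) is equivalent to f^*(X₁,p₁,Γ) ⊞ f^*(X₂,p₂,Γ); an equivalence is given on vertices by (v,x,y) ↦ (v,x,v,y). -/
open Classical Matrix Kronecker

universe u

noncomputable section

/-!
Up to regrouping coordinates, both graphs have as vertices the triples `(v, x, y)` with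
`f v = p₁ x = p₂ y`. Unfolding either adjacency and discarding the clauses ruled out by
looplessness (an edge `f v ∼ f w` of `B` forces `v`, `x` and `y` all to move, since
`f v = p₁ x = p₂ y`) leaves the same relation `fiberTripleAdj`: move one of `x`, `y` inside its
fiber over a fixed `v`, move `v` inside a fiber of `f` keeping `x` and `y`, or move all three
along an edge of `B`.
-/

theorem pullbackGraph_adj_iff {VB VX VC : Type*} {B : SimpleGraph VB} {X : SimpleGraph VX}
    {f : VB → VC} {p : VX → VC} {C : SimpleGraph VC} (a b : PullbackVert f p) :
    (pullbackGraph B X f p C).Adj a b ↔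
      (a.1.1 = b.1.1 ∧ X.Adj a.1.2 b.1.2) ∨
      (B.Adj a.1.1 b.1.1 ∧ (a.1.2 = b.1.2 ∨ C.Adj (f a.1.1) (f b.1.1) ∧ X.Adj a.1.2 b.1.2)) := by
  have hfiber : a.1.2 = b.1.2 → f a.1.1 = f b.1.1 := fun h => by rw [a.2, b.2, h]
  simp only [pullbackGraph]
  grind

section
variable {V' V W₁ W₂ : Type*} (B' : SimpleGraph V') (B : SimpleGraph V)
  (X₁ : SimpleGraph W₁) (X₂ : SimpleGraph W₂) (f : V' → V) (p₁ : W₁ → V) (p₂ : W₂ → V)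

def fiberTripleAdj (v w : V') (x x' : W₁) (y y' : W₂) : Prop :=
  (v = w ∧ (x = x' ∧ X₂.Adj y y' ∨ X₁.Adj x x' ∧ y = y')) ∨
  (B'.Adj v w ∧ (x = x' ∧ y = y' ∨ B.Adj (f v) (f w) ∧ X₁.Adj x x' ∧ X₂.Adj y y'))

def pullbackSubdirEquiv :
    PullbackVert f (fun c : PullbackVert p₁ p₂ => p₁ c.1.1) ≃
      PullbackVert (pullbackProj f p₁) (pullbackProj f p₂) where
  toFun a := ⟨(⟨(a.1.1, a.1.2.1.1), a.2⟩, ⟨(a.1.1, a.1.2.1.2), a.2.trans a.1.2.2⟩), rfl⟩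
  invFun b := ⟨(b.1.1.1.1, ⟨(b.1.1.1.2, b.1.2.1.2),
    b.1.1.2.symm.trans ((congrArg f b.2).trans b.1.2.2)⟩), b.1.1.2⟩
  left_inv _ := rfl
  right_inv := by
    rintro ⟨⟨⟨⟨v, _⟩, _⟩, ⟨⟨w, _⟩, _⟩⟩, hvw : v = w⟩
    subst hvw
    rfl

variable {B' B X₁ X₂ f p₁ p₂}

theorem pullback_subdir_adj_iff
    (a b : PullbackVert f (fun c : PullbackVert p₁ p₂ => p₁ c.1.1)) :
    (pullbackGraph B' (pullbackGraph X₁ X₂ p₁ p₂ B) f (fun c => p₁ c.1.1) B).Adj a b ↔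
      fiberTripleAdj B' B X₁ X₂ f
        a.1.1 b.1.1 a.1.2.1.1 b.1.2.1.1 a.1.2.1.2 b.1.2.1.2 := by
  obtain ⟨⟨v, ⟨⟨x, y⟩, hxy⟩⟩, hv⟩ := a
  obtain ⟨⟨w, ⟨⟨x', y'⟩, hxy'⟩⟩, hw⟩ := b
  simp only at hv hw hxy hxy'
  rw [pullbackGraph_adj_iff, pullbackGraph_adj_iff]
  simp only [fiberTripleAdj, Subtype.mk.injEq, Prod.mk.injEq]
  rw [← hv, ← hw]
  have hloop : B.Adj (f v) (f w) → f v ≠ f w := B.ne_of_adj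
  have hx_eq : x = x' → f v = f w := fun h => by rw [hv, hw, h]
  have hy_eq : y = y' → f v = f w := fun h => by rw [hv, hw, hxy, hxy', h]
  tauto

theorem subdir_pullback_adj_iff
    (a b : PullbackVert (pullbackProj f p₁) (pullbackProj f p₂)) :
    (pullbackGraph (pullbackGraph B' X₁ f p₁ B) (pullbackGraph B' X₂ f p₂ B)
      (pullbackProj f p₁) (pullbackProj f p₂) B').Adj a b ↔
      fiberTripleAdj B' B X₁ X₂ f
        a.1.1.1.1 b.1.1.1.1 a.1.1.1.2 b.1.1.1.2 a.1.2.1.2 b.1.2.1.2 := by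
  obtain ⟨⟨⟨⟨v, x⟩, hx⟩, ⟨⟨v₂, y⟩, hy⟩⟩, hv⟩ := a
  obtain ⟨⟨⟨⟨w, x'⟩, hx'⟩, ⟨⟨w₂, y'⟩, hy'⟩⟩, hw⟩ := b
  simp only [pullbackProj] at hv hw hx hy hx' hy'
  subst hv hw
  rw [pullbackGraph_adj_iff, pullbackGraph_adj_iff, pullbackGraph_adj_iff]
  simp only [fiberTripleAdj, pullbackProj, Subtype.mk.injEq, Prod.mk.injEq]
  have hloop : B'.Adj v w → v ≠ w := B'.ne_of_adj
  have hloop' : B.Adj (f v) (f w) → f v ≠ f w := B.ne_of_adj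
  have hx_eq : x = x' → f v = f w := fun h => by rw [hx, hx', h]
  have hy_eq : y = y' → f v = f w := fun h => by rw [hy, hy', h]
  tauto

end

theorem pullback_subdir_general
    {VB' VB VX₁ VX₂ : Type*}
    (B' : SimpleGraph VB') (B : SimpleGraph VB)
    (X₁ : SimpleGraph VX₁) (X₂ : SimpleGraph VX₂)
    (p₁ : VX₁ → VB) (p₂ : VX₂ → VB) (f : VB' → VB) :
    ∃ Ψ : (pullbackGraph B' (pullbackGraph X₁ X₂ p₁ p₂ B) f (fun a => p₁ a.1.1) B) ≃g
          (pullbackGraph (pullbackGraph B' X₁ f p₁ B) (pullbackGraph B' X₂ f p₂ B)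
            (pullbackProj f p₁) (pullbackProj f p₂) B'),
      (∀ a, (Ψ a).1.1.1.1 = a.1.1) ∧
      (∀ a, ((Ψ a).1.1).1 = (a.1.1, a.1.2.1.1) ∧ ((Ψ a).1.2).1 = (a.1.1, a.1.2.1.2)) :=
  ⟨⟨pullbackSubdirEquiv f p₁ p₂, fun {a b} =>
      (subdir_pullback_adj_iff _ _).trans (pullback_subdir_adj_iff a b).symm⟩,
    fun _ => rfl, fun _ => ⟨rfl, rfl⟩⟩

/-- pullback commutes with the subdirect product of graph bundles;
an equivalence is given on vertices by `(v, x, y) ↦ ((v, x), (v, y))`. -/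
theorem pullback_subdir
    {VB' VB VF₁ VF₂ VX₁ VX₂ : Type*}
    [Fintype VB'] [Fintype VB] [Fintype VF₁] [Fintype VF₂] [Fintype VX₁] [Fintype VX₂]
    (B' : SimpleGraph VB') (B : SimpleGraph VB)
    (F₁ : SimpleGraph VF₁) (F₂ : SimpleGraph VF₂)
    (X₁ : SimpleGraph VX₁) (X₂ : SimpleGraph VX₂)
    (p₁ : VX₁ → VB) (p₂ : VX₂ → VB) (f : VB' → VB)
    (h₁ : IsGraphBundle F₁ X₁ p₁ B) (h₂ : IsGraphBundle F₂ X₂ p₂ B)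
    (hf : IsGraphMorphism B' B f) :
    ∃ Ψ : (pullbackGraph B' (pullbackGraph X₁ X₂ p₁ p₂ B) f (fun a => p₁ a.1.1) B) ≃g
          (pullbackGraph (pullbackGraph B' X₁ f p₁ B) (pullbackGraph B' X₂ f p₂ B)
            (pullbackProj f p₁) (pullbackProj f p₂) B'),
      (∀ a, (Ψ a).1.1.1.1 = a.1.1) ∧
      (∀ a, ((Ψ a).1.1).1 = (a.1.1, a.1.2.1.1) ∧ ((Ψ a).1.2).1 = (a.1.1, a.1.2.1.2)) :=
  pullback_subdir_general B' B X₁ X₂ p₁ p₂ f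
end
end

section
/- Let φ₁: A₁ → B and φ₂: A₂ → B be surjective homomorphisms of finite groups, and let S₁ = {s₁,…,sₙ} be a symmetric generating set of B with 1_B ∉ S₁. For i = 1,2 let S̃_{1,i} = {s̃_{1,i},…,s̃_{n,i}} be an S₁-transversal section of φᵢ, let S_{0,i} be an admissible symmetric generating set of ker(φᵢ), and set S_{φᵢ} = S_{0,i} ∪ S̃_{1,i}. Let φ: A₁ ×_B A₂ → B be the surjection induced by (φ₁,φ₂), and define S̃₁ = {(s̃_{j,1},s̃_{j,2}) : j = 1,…,n}, S₀ = (S_{0,1} × {1_{A₂}}) ∪ ({1_{A₁}} × S_{0,2}), and S_φ = S₀ ∪ S̃₁. Then Cay(A₁ ×_B A₂, S_φ) = Cay(A₁,S_{φ₁}) ⊞ Cay(A₂,S_{φ₂}); that is, the Cayley graph of the subdirect product of groups equals the total space of the subdirect product of the graph bundles (Cay(A₁,S_{φ₁}), φ₁, Cay(B,S₁)) and (Cay(A₂,S_{φ₂}), φ₂, Cay(B,S₁)), with the same vertex set and the same edge set. -/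
open Classical Matrix Kronecker

universe u

noncomputable section

/-! With a symmetric generating set not containing `1`, `x ∼ y` in a Cayley graph iff `x⁻¹ * y` is a
generator, and the same holds for `X₁ ⊞ X₂` once each of its three adjacency clauses is read off the
quotients `xᵢ⁻¹ * yᵢ`. So everything reduces to comparing generators: since `φᵢ` kills `S_{0,i}` and
sends the lift of `s` to `s ≠ 1`, an element `(g₁, g₂)` of `A₁ ×_B A₂` lies in `S_{0,1} × 1`,
`1 × S_{0,2}` or `S̃₁` exactly when it is a fibre step in `X₁`, a fibre step in `X₂`, or a lift
of a base step in both factors. -/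

lemma cayleyGraph_adj_iff {G : Type*} [Group G] {S : Set G} (hsym : ∀ s ∈ S, s⁻¹ ∈ S)
    (hone : (1 : G) ∉ S) {x y : G} : (cayleyGraph S).Adj x y ↔ x⁻¹ * y ∈ S := by
  have hrel : ∀ {a b : G}, (∃ s ∈ S, b = a * s) ↔ a⁻¹ * b ∈ S := fun {a b} =>
    ⟨fun ⟨s, hs, h⟩ => by rwa [h, inv_mul_cancel_left],
      fun h => ⟨_, h, (mul_inv_cancel_left a b).symm⟩⟩
  simp only [cayleyGraph, SimpleGraph.fromRel_adj, hrel]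
  constructor
  · rintro ⟨-, h | h⟩
    · exact h
    · simpa using hsym _ h
  · exact fun h => ⟨fun hxy => hone (by simpa [hxy] using h), Or.inl h⟩

section InducedGenerators

variable {A B : Type*} [Group A] [Group B] {φ : A →* B} {S₀ : Set A} {S₁ : Set B} {t : B → A}

lemma inv_mem_union_image (hS₀ : ∀ s ∈ S₀, s⁻¹ ∈ S₀) (hS₁ : ∀ s ∈ S₁, s⁻¹ ∈ S₁)
    (ht : ∀ s ∈ S₁, t s⁻¹ = (t s)⁻¹) : ∀ u ∈ S₀ ∪ t '' S₁, u⁻¹ ∈ S₀ ∪ t '' S₁ := by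
  rintro u (hu | ⟨s, hs, rfl⟩)
  · exact Or.inl (hS₀ u hu)
  · exact Or.inr ⟨s⁻¹, hS₁ s hs, ht s hs⟩

lemma one_notMem_union_image (hS₀ : (1 : A) ∉ S₀) (hS₁ : (1 : B) ∉ S₁)
    (ht : ∀ s ∈ S₁, φ (t s) = s) : (1 : A) ∉ S₀ ∪ t '' S₁ := by
  rintro (h | ⟨s, hs, hts⟩)
  · exact hS₀ h
  · exact hS₁ (by rwa [← ht s hs, hts, map_one] at hs)

lemma mem_iff_mem_union_image_and_map_eq_one (hS₀ : S₀ ⊆ φ.ker) (hS₁ : (1 : B) ∉ S₁)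
    (ht : ∀ s ∈ S₁, φ (t s) = s) {u : A} : u ∈ S₀ ↔ u ∈ S₀ ∪ t '' S₁ ∧ φ u = 1 := by
  refine ⟨fun hu => ⟨Or.inl hu, hS₀ hu⟩, ?_⟩
  rintro ⟨hu | ⟨s, hs, rfl⟩, hφ⟩
  · exact hu
  · exact absurd ((ht s hs).symm.trans hφ ▸ hs) hS₁

lemma mem_image_iff_mem_union_image_and_map_mem (hS₀ : S₀ ⊆ φ.ker) (hS₁ : (1 : B) ∉ S₁)
    (ht : ∀ s ∈ S₁, φ (t s) = s) {u : A} : u ∈ t '' S₁ ↔ u ∈ S₀ ∪ t '' S₁ ∧ φ u ∈ S₁ := by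
  refine ⟨?_, ?_⟩
  · rintro ⟨s, hs, rfl⟩
    exact ⟨Or.inr ⟨s, hs, rfl⟩, (ht s hs).symm ▸ hs⟩
  · rintro ⟨hu | hu, hφ⟩
    · exact absurd ((hS₀ hu : φ u = 1) ▸ hφ) hS₁
    · exact hu

end InducedGenerators

section SubdirectProduct

variable {A₁ A₂ B : Type*} [Group A₁] [Group A₂] [Group B] {φ₁ : A₁ →* B} {φ₂ : A₂ →* B}
  {S₁ : Set B} {t₁ : B → A₁} {t₂ : B → A₂} {S01 : Set A₁} {S02 : Set A₂}

variable (φ₁ φ₂ S₁ t₁ t₂ S01 S02) in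
/-- The generating set `S₀ ∪ S̃₁` of `A₁ ×_B A₂`. -/
def subdirGens : Set (subdirSubgroup φ₁ φ₂) :=
  {x | ((x : A₁ × A₂).1 ∈ S01 ∧ (x : A₁ × A₂).2 = 1) ∨
    ((x : A₁ × A₂).1 = 1 ∧ (x : A₁ × A₂).2 ∈ S02) ∨
    (∃ s ∈ S₁, (x : A₁ × A₂) = (t₁ s, t₂ s))}

lemma mem_subdirGens_iff (hS01 : S01 ⊆ φ₁.ker) (hS02 : S02 ⊆ φ₂.ker) (hS₁ : (1 : B) ∉ S₁)
    (ht₁ : ∀ s ∈ S₁, φ₁ (t₁ s) = s) (ht₂ : ∀ s ∈ S₁, φ₂ (t₂ s) = s) (g : subdirSubgroup φ₁ φ₂) :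
    g ∈ subdirGens φ₁ φ₂ S₁ t₁ t₂ S01 S02 ↔
      ((g : A₁ × A₂).1 = 1 ∧ (g : A₁ × A₂).2 ∈ S02 ∪ t₂ '' S₁) ∨
      ((g : A₁ × A₂).1 ∈ S01 ∪ t₁ '' S₁ ∧ φ₁ (g : A₁ × A₂).1 = 1 ∧ (g : A₁ × A₂).2 = 1) ∨
      ((g : A₁ × A₂).1 ∈ S01 ∪ t₁ '' S₁ ∧ φ₁ (g : A₁ × A₂).1 ∈ S₁ ∧
        (g : A₁ × A₂).2 ∈ S02 ∪ t₂ '' S₁) := by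
  obtain ⟨⟨g₁, g₂⟩, hg⟩ := g
  change φ₁ g₁ = φ₂ g₂ at hg
  have diagonal : (∃ s ∈ S₁, (g₁, g₂) = (t₁ s, t₂ s)) ↔ g₁ ∈ t₁ '' S₁ ∧ g₂ ∈ t₂ '' S₁ := by
    refine ⟨fun ⟨s, hs, h⟩ => ?_, fun ⟨⟨s, hs, h₁⟩, ⟨s', hs', h₂⟩⟩ => ⟨s, hs, ?_⟩⟩
    · obtain ⟨rfl, rfl⟩ := Prod.ext_iff.mp h
      exact ⟨⟨s, hs, rfl⟩, ⟨s, hs, rfl⟩⟩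
    · obtain rfl : s = s' := by rw [← ht₁ s hs, ← ht₂ s' hs', h₁, h₂, hg]
      rw [h₁, h₂]
  have horizontal : g₁ ∈ S01 ∧ g₂ = 1 ↔ g₁ ∈ S01 ∪ t₁ '' S₁ ∧ φ₁ g₁ = 1 ∧ g₂ = 1 := by
    rw [mem_iff_mem_union_image_and_map_eq_one hS01 hS₁ ht₁, and_assoc]
  have vertical : g₁ = 1 ∧ g₂ ∈ S02 ↔ g₁ = 1 ∧ g₂ ∈ S02 ∪ t₂ '' S₁ := by
    refine and_congr_right fun h => ?_
    rw [mem_iff_mem_union_image_and_map_eq_one hS02 hS₁ ht₂, ← hg, h, map_one, eq_self, and_true]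
  have transversal : g₁ ∈ t₁ '' S₁ ∧ g₂ ∈ t₂ '' S₁ ↔
      g₁ ∈ S01 ∪ t₁ '' S₁ ∧ φ₁ g₁ ∈ S₁ ∧ g₂ ∈ S02 ∪ t₂ '' S₁ := by
    rw [mem_image_iff_mem_union_image_and_map_mem hS01 hS₁ ht₁,
      mem_image_iff_mem_union_image_and_map_mem hS02 hS₁ ht₂, hg]
    tauto
  simp only [subdirGens, Set.mem_ofPred_eq]
  rw [diagonal, horizontal, vertical, transversal, or_left_comm]

lemma inv_mem_subdirGens (hS01 : ∀ s ∈ S01, s⁻¹ ∈ S01) (hS02 : ∀ s ∈ S02, s⁻¹ ∈ S02)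
    (hS₁ : ∀ s ∈ S₁, s⁻¹ ∈ S₁) (ht₁ : ∀ s ∈ S₁, t₁ s⁻¹ = (t₁ s)⁻¹)
    (ht₂ : ∀ s ∈ S₁, t₂ s⁻¹ = (t₂ s)⁻¹) :
    ∀ g ∈ subdirGens φ₁ φ₂ S₁ t₁ t₂ S01 S02, g⁻¹ ∈ subdirGens φ₁ φ₂ S₁ t₁ t₂ S01 S02 := by
  rintro ⟨⟨g₁, g₂⟩, hg⟩ (⟨h₁, h₂⟩ | ⟨h₁, h₂⟩ | ⟨s, hs, h⟩)
  · exact Or.inl ⟨hS01 g₁ h₁, inv_eq_one.mpr h₂⟩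
  · exact Or.inr (Or.inl ⟨inv_eq_one.mpr h₁, hS02 g₂ h₂⟩)
  · refine Or.inr (Or.inr ⟨s⁻¹, hS₁ s hs, ?_⟩)
    rw [ht₁ s hs, ht₂ s hs]
    exact congrArg Inv.inv h

lemma one_notMem_subdirGens (hS01 : S01 ⊆ φ₁.ker) (hS02 : S02 ⊆ φ₂.ker)
    (hS01one : (1 : A₁) ∉ S01) (hS02one : (1 : A₂) ∉ S02) (hS₁ : (1 : B) ∉ S₁)
    (ht₁ : ∀ s ∈ S₁, φ₁ (t₁ s) = s) (ht₂ : ∀ s ∈ S₁, φ₂ (t₂ s) = s) :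
    1 ∉ subdirGens φ₁ φ₂ S₁ t₁ t₂ S01 S02 := by
  simp [mem_subdirGens_iff hS01 hS02 hS₁ ht₁ ht₂, one_notMem_union_image hS01one hS₁ ht₁,
    one_notMem_union_image hS02one hS₁ ht₂]

end SubdirectProduct

theorem cayley_subdirect_general
    {A₁ A₂ B : Type*} [Group A₁] [Group A₂] [Group B]
    (φ₁ : A₁ →* B) (φ₂ : A₂ →* B)
    (S₁ : Set B) (hS₁sym : ∀ s ∈ S₁, s⁻¹ ∈ S₁)
    (hS₁one : (1 : B) ∉ S₁)
    (t₁ : B → A₁) (t₂ : B → A₂)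
    (ht₁ : ∀ s ∈ S₁, φ₁ (t₁ s) = s) (ht₂ : ∀ s ∈ S₁, φ₂ (t₂ s) = s)
    (ht₁inv : ∀ s ∈ S₁, t₁ s⁻¹ = (t₁ s)⁻¹) (ht₂inv : ∀ s ∈ S₁, t₂ s⁻¹ = (t₂ s)⁻¹)
    (S01 : Set A₁) (S02 : Set A₂)
    (hS01sym : ∀ s ∈ S01, s⁻¹ ∈ S01) (hS02sym : ∀ s ∈ S02, s⁻¹ ∈ S02)
    (hS01sub : S01 ⊆ (φ₁.ker : Set A₁)) (hS02sub : S02 ⊆ (φ₂.ker : Set A₂))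
    (hS01one : (1 : A₁) ∉ S01) (hS02one : (1 : A₂) ∉ S02) :
    cayleyGraph
      ({x : ↥(subdirSubgroup φ₁ φ₂) |
          ((x : A₁ × A₂).1 ∈ S01 ∧ (x : A₁ × A₂).2 = 1) ∨
          ((x : A₁ × A₂).1 = 1 ∧ (x : A₁ × A₂).2 ∈ S02) ∨
          (∃ s ∈ S₁, (x : A₁ × A₂) = (t₁ s, t₂ s))}) =
      pullbackGraph (cayleyGraph (S01 ∪ t₁ '' S₁)) (cayleyGraph (S02 ∪ t₂ '' S₁))
        (⇑φ₁) (⇑φ₂) (cayleyGraph S₁) := by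
  change cayleyGraph (subdirGens φ₁ φ₂ S₁ t₁ t₂ S01 S02) = _
  ext x y
  rw [cayleyGraph_adj_iff (inv_mem_subdirGens hS01sym hS02sym hS₁sym ht₁inv ht₂inv)
      (one_notMem_subdirGens hS01sub hS02sub hS01one hS02one hS₁one ht₁ ht₂),
    mem_subdirGens_iff hS01sub hS02sub hS₁one ht₁ ht₂]
  simp only [pullbackGraph,
    cayleyGraph_adj_iff (inv_mem_union_image hS01sym hS₁sym ht₁inv)
      (one_notMem_union_image hS01one hS₁one ht₁),
    cayleyGraph_adj_iff (inv_mem_union_image hS02sym hS₁sym ht₂inv)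
      (one_notMem_union_image hS02one hS₁one ht₂),
    cayleyGraph_adj_iff hS₁sym hS₁one, Subgroup.coe_mul, Subgroup.coe_inv, Prod.fst_mul,
    Prod.snd_mul, Prod.fst_inv, Prod.snd_inv, inv_mul_eq_one, map_mul, map_inv]

/-- the Cayley graph of the subdirect product of two finite groups equals
the total space of the subdirect product of the associated Cayley graph bundles. -/
theorem cayley_subdirect
    {A₁ A₂ B : Type*} [Group A₁] [Group A₂] [Group B] [Fintype A₁] [Fintype A₂] [Fintype B]
    (φ₁ : A₁ →* B) (φ₂ : A₂ →* B)
    (h₁surj : Function.Surjective φ₁) (h₂surj : Function.Surjective φ₂)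
    (S₁ : Set B) (hS₁sym : ∀ s ∈ S₁, s⁻¹ ∈ S₁) (hS₁gen : Subgroup.closure S₁ = ⊤)
    (hS₁one : (1 : B) ∉ S₁)
    (t₁ : B → A₁) (t₂ : B → A₂)
    (ht₁ : ∀ s ∈ S₁, φ₁ (t₁ s) = s) (ht₂ : ∀ s ∈ S₁, φ₂ (t₂ s) = s)
    (ht₁inv : ∀ s ∈ S₁, t₁ s⁻¹ = (t₁ s)⁻¹) (ht₂inv : ∀ s ∈ S₁, t₂ s⁻¹ = (t₂ s)⁻¹)
    (S01 : Set A₁) (S02 : Set A₂)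
    (hS01sym : ∀ s ∈ S01, s⁻¹ ∈ S01) (hS02sym : ∀ s ∈ S02, s⁻¹ ∈ S02)
    (hS01sub : S01 ⊆ (φ₁.ker : Set A₁)) (hS02sub : S02 ⊆ (φ₂.ker : Set A₂))
    (hS01gen : Subgroup.closure S01 = φ₁.ker) (hS02gen : Subgroup.closure S02 = φ₂.ker)
    (hS01one : (1 : A₁) ∉ S01) (hS02one : (1 : A₂) ∉ S02)
    (hadm₁ : ∀ (a : A₁), ∀ s ∈ S01, a * s * a⁻¹ ∈ S01)
    (hadm₂ : ∀ (a : A₂), ∀ s ∈ S02, a * s * a⁻¹ ∈ S02) :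
    cayleyGraph
      ({x : ↥(subdirSubgroup φ₁ φ₂) |
          ((x : A₁ × A₂).1 ∈ S01 ∧ (x : A₁ × A₂).2 = 1) ∨
          ((x : A₁ × A₂).1 = 1 ∧ (x : A₁ × A₂).2 ∈ S02) ∨
          (∃ s ∈ S₁, (x : A₁ × A₂) = (t₁ s, t₂ s))}) =
      pullbackGraph (cayleyGraph (S01 ∪ t₁ '' S₁)) (cayleyGraph (S02 ∪ t₂ '' S₁))
        (⇑φ₁) (⇑φ₂) (cayleyGraph S₁) :=
  cayley_subdirect_general φ₁ φ₂ S₁ hS₁sym hS₁one t₁ t₂ ht₁ ht₂ ht₁inv ht₂inv S01 S02 hS01sym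
    hS02sym hS01sub hS02sub hS01one hS02one
end
end
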